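/- arXiv:2409.09341 — 2 statements merged into one kernel-verified Lean document; each statement's English description precedes it below -/
import Mathlib

section
/- Let f be a 3×3 real matrix (second-order tensor on ℝ³) that is trace-free (f₁₁ + f₂₂ + f₃₃ = 0) and satisfies ξⁱ f_{ij} = 0 for a fixed nonzero vector ξ ∈ ℝ³. Suppose there exist angles α₁, α₂, α₃ ∈ ℝ with αᵢ ≠ αⱼ + nπ for all integers n and i ≠ j, and an angle β₁, such that with ω_q = (sin α_q cos β₁, sin α_q sin β₁, cos α_q), (ω_q)_α = (cos α_q cos β₁, cos α_q sin β₁, −sin α_q), (ω_q)_β = (−sin β₁, cos β₁, 0), and with ξ proportional to (−sin β₁, cos β₁, 0), the conditions ω_qⁱ (ω_q)_αʲ f_{ij} = 0 for q = 1,2,3 and ω_qⁱ (ω_q)_βʲ f_{ij} = 0 for q = 1,2,3 hold. Then f = 0. -/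
/-!
Rotating about the `z`-axis by `β` reduces everything to `β = 0`, where `ξ` spans the `y`-axis
and every `ω_q` lies in the `xz`-plane. There the conditions on `ω_q ⊗ (ω_q)_β` say that a linear
binary form in `(sin α_q, cos α_q)` vanishes at two non-proportional points, and those on
`ω_q ⊗ (ω_q)_α` that a quadratic binary form vanishes at three pairwise non-proportional points;
both forms vanish identically since their projective Vandermonde determinants are products of
`sin (α_i - α_j) ≠ 0`. With the vanishing `y`-row and the trace, this kills all nine entries.
-/

open Real Finset Matrix

theorem Matrix.eq_zero_of_forall_sum_pow_mul_pow_mul_eq_zero {R : Type*} [CommRing R] [IsDomain R]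
    {n : ℕ} {v w c : Fin n → R} (hvw : ∀ i j, i ≠ j → v j * w i - v i * w j ≠ 0)
    (h : ∀ k, ∑ m : Fin n, v k ^ (m : ℕ) * w k ^ (m.rev : ℕ) * c m = 0) : c = 0 := by
  refine eq_zero_of_mulVec_eq_zero (M := projVandermonde v w) ?_ (funext h)
  rw [det_projVandermonde]
  exact prod_ne_zero_iff.mpr fun i _ ↦ prod_ne_zero_iff.mpr fun j hj ↦
    hvw i j (mem_Ioi.mp hj).ne

theorem Real.sin_sub_ne_zero {x y : ℝ} (h : ∀ n : ℤ, x ≠ y + n * π) : sin (x - y) ≠ 0 :=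
  sin_ne_zero_iff.mpr fun n hn ↦ h n (by linarith)

theorem Matrix.sum_sum_mul_mul_eq_dotProduct_mulVec {R n : Type*} [CommSemiring R] [Fintype n]
    (a b : n → R) (f : Matrix n n R) : ∑ i, ∑ j, a i * b j * f i j = a ⬝ᵥ f *ᵥ b := by
  simp only [dotProduct, mulVec, mul_sum]
  exact sum_congr rfl fun i _ ↦ sum_congr rfl fun j _ ↦ by ring

theorem Matrix.mulVec_dotProduct_mulVec_mulVec {R n : Type*} [CommSemiring R] [Fintype n]
    (P f : Matrix n n R) (v w : n → R) :
    (P *ᵥ v) ⬝ᵥ f *ᵥ (P *ᵥ w) = v ⬝ᵥ (Pᵀ * f * P) *ᵥ w := by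
  rw [← mulVec_mulVec, ← mulVec_mulVec, dotProduct_mulVec v, vecMul_transpose]

noncomputable def rotationZ (β : ℝ) : Matrix (Fin 3) (Fin 3) ℝ :=
  !![cos β, -sin β, 0; sin β, cos β, 0; 0, 0, 1]

theorem rotationZ_mulVec (β x y z : ℝ) :
    rotationZ β *ᵥ ![x, y, z] = ![cos β * x - sin β * y, sin β * x + cos β * y, z] := by
  ext i
  fin_cases i <;> simp [rotationZ, mulVec, dotProduct, Fin.sum_univ_three, sub_eq_add_neg]

theorem rotationZ_mul_transpose (β : ℝ) : rotationZ β * (rotationZ β)ᵀ = 1 := by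
  ext i j
  fin_cases i <;> fin_cases j <;> simp [rotationZ, mul_apply, Fin.sum_univ_three, ← sq, mul_comm]

theorem eq_zero_of_mixedRayConditions_of_beta_eq_zero (g : Matrix (Fin 3) (Fin 3) ℝ)
    (α : Fin 3 → ℝ) (hα : ∀ i j : Fin 3, i ≠ j → ∀ n : ℤ, α i ≠ α j + n * π)
    (htrace : g.trace = 0) (hrow : ![0, 1, 0] ᵥ* g = 0)
    (h1 : ∀ q, ![sin (α q), 0, cos (α q)] ⬝ᵥ g *ᵥ ![cos (α q), 0, -sin (α q)] = 0)
    (h2 : ∀ q, ![sin (α q), 0, cos (α q)] ⬝ᵥ g *ᵥ ![0, 1, 0] = 0) : g = 0 := by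
  have hsin : ∀ i j, i ≠ j → sin (α j) * cos (α i) - sin (α i) * cos (α j) ≠ 0 :=
    fun i j hij ↦ by convert sin_sub_ne_zero (hα j i hij.symm) using 1; rw [sin_sub]; ring
  have hrow' : ∀ j, g 1 j = 0 := fun j ↦ by
    simpa [vecMul, dotProduct, Fin.sum_univ_three] using congrFun hrow j
  have hlinear : ![g 2 1, g 0 1] = 0 := by
    refine eq_zero_of_forall_sum_pow_mul_pow_mul_eq_zero (v := fun k : Fin 2 ↦ sin (α k.castSucc))
      (w := fun k ↦ cos (α k.castSucc)) (fun i j hij ↦ hsin _ _ (by simpa using hij)) fun k ↦ ?_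
    rw [← h2 k.castSucc]
    simp only [Fin.sum_univ_two, Fin.val_rev, Fin.val_zero, Fin.val_one, Nat.reduceAdd,
      Nat.reduceSub, vec3_dotProduct, mulVec, Matrix.cons_val]
    ring
  have hquadratic : ![g 2 0, g 0 0 - g 2 2, -g 0 2] = 0 := by
    refine eq_zero_of_forall_sum_pow_mul_pow_mul_eq_zero (v := fun k ↦ sin (α k))
      (w := fun k ↦ cos (α k)) hsin fun k ↦ ?_
    rw [← h1 k]
    simp only [Fin.sum_univ_three, Fin.val_rev, Fin.val_zero, Fin.val_one, Fin.val_two,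
      Nat.reduceAdd, Nat.reduceSub, vec3_dotProduct, mulVec, Matrix.cons_val]
    ring
  obtain ⟨h21, h01⟩ : g 2 1 = 0 ∧ g 0 1 = 0 := ⟨congrFun hlinear 0, congrFun hlinear 1⟩
  obtain ⟨h20, hdiag, h02⟩ : g 2 0 = 0 ∧ g 0 0 - g 2 2 = 0 ∧ -g 0 2 = 0 :=
    ⟨congrFun hquadratic 0, congrFun hquadratic 1, congrFun hquadratic 2⟩
  rw [trace_fin_three, hrow' 1] at htrace
  ext i j
  fin_cases i <;> fin_cases j <;> simp <;> linarith [hrow' 0, hrow' 1, hrow' 2]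

/-- Ellipticity of the principal symbol of the normal operator of the restricted
mixed ray transform on 2-tensor fields in ℝ³. -/
theorem stmt_0
    (f : Matrix (Fin 3) (Fin 3) ℝ) (α : Fin 3 → ℝ) (β c : ℝ)
    (ω ωα : Fin 3 → Fin 3 → ℝ) (ωβ ξ : Fin 3 → ℝ)
    (hω : ω = fun q => ![Real.sin (α q) * Real.cos β, Real.sin (α q) * Real.sin β,
      Real.cos (α q)])
    (hωα : ωα = fun q => ![Real.cos (α q) * Real.cos β, Real.cos (α q) * Real.sin β,
      -Real.sin (α q)])
    (hωβ : ωβ = ![-Real.sin β, Real.cos β, 0])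
    (hξ : ξ = c • ωβ) (hc : c ≠ 0)
    (hα : ∀ i j : Fin 3, i ≠ j → ∀ n : ℤ, α i ≠ α j + n * Real.pi)
    (htrace : f 0 0 + f 1 1 + f 2 2 = 0)
    (hdiv : ∀ j : Fin 3, ∑ i, ξ i * f i j = 0)
    (h1 : ∀ q : Fin 3, ∑ i, ∑ j, ω q i * ωα q j * f i j = 0)
    (h2 : ∀ q : Fin 3, ∑ i, ∑ j, ω q i * ωβ j * f i j = 0) :
    f = 0 := by
  subst hω hωα hωβ hξ
  set R := rotationZ β
  have hR : R * Rᵀ = 1 := rotationZ_mul_transpose β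
  have hω q : ![sin (α q) * cos β, sin (α q) * sin β, cos (α q)] =
      R *ᵥ ![sin (α q), 0, cos (α q)] := by
    rw [rotationZ_mulVec]; ring_nf
  have hωα q : ![cos (α q) * cos β, cos (α q) * sin β, -sin (α q)] =
      R *ᵥ ![cos (α q), 0, -sin (α q)] := by
    rw [rotationZ_mulVec]; ring_nf
  have hωβ : ![-sin β, cos β, 0] = R *ᵥ ![0, 1, 0] := by
    rw [rotationZ_mulVec]; ring_nf
  have hdiv' : ![-sin β, cos β, 0] ᵥ* f = 0 := by
    have : c • (![-sin β, cos β, 0] ᵥ* f) = 0 := by rw [← smul_vecMul]; exact funext hdiv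
    exact (smul_eq_zero.mp this).resolve_left hc
  have hf : f = R * (Rᵀ * f * R) * Rᵀ := by
    simp only [← mul_assoc, hR, one_mul]
    rw [mul_assoc, hR, mul_one]
  rw [hf, eq_zero_of_mixedRayConditions_of_beta_eq_zero (Rᵀ * f * R) α hα ?_ ?_ ?_ ?_,
    mul_zero, zero_mul]
  · rwa [trace_mul_cycle, hR, one_mul, trace_fin_three]
  · rw [← vecMul_vecMul, ← vecMul_vecMul, vecMul_transpose, ← hωβ, hdiv', zero_vecMul]
  · intro q
    rw [← mulVec_dotProduct_mulVec_mulVec, ← hω, ← hωα, ← sum_sum_mul_mul_eq_dotProduct_mulVec]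
    exact h1 q
  · intro q
    rw [← mulVec_dotProduct_mulVec_mulVec, ← hω, ← hωβ, ← sum_sum_mul_mul_eq_dotProduct_mulVec]
    exact h2 q
end

section
/- Let ω₁, ω₂, ω₃ be three pairwise linearly independent unit vectors lying in a common plane H ⊂ ℝ³ with unit normal ν, where ω_q = (sin α_q cos β, sin α_q sin β, cos α_q), (ω_q)_α = (cos α_q cos β, cos α_q sin β, −sin α_q), (ω_q)_β = (−sin β, cos β, 0) = ν. Then the five 3×3 matrices ω₁ ⊗ (ω₁)_α, ω₂ ⊗ (ω₂)_α, ω₃ ⊗ (ω₃)_α, ω₁ ⊗ (ω₁)_β, ω₂ ⊗ (ω₂)_β are linearly independent in the 9-dimensional space of 3×3 real matrices, provided α_i − α_j ∉ πℤ for i ≠ j. -/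
/-! Write `e = (cos β, sin β, 0)` and `z = (0, 0, 1)`, so that `e, z, ν` is orthonormal,
`ω_q = sin α_q e + cos α_q z` and `(ω_q)_α = cos α_q e - sin α_q z` lie in the plane of `e, z`.
Pairing a vanishing combination `∑ g_k M_k` with `e ⊗ ν` and `z ⊗ ν` kills the `α`-tensors and leaves
`g₄ ω₁ + g₅ ω₂ = 0`, a `2 × 2` system with determinant `sin (α₁ - α₂)`. Pairing with `e ⊗ e`, `e ⊗ z`,
`z ⊗ e` kills the `β`-tensors and leaves a system in `g₁, g₂, g₃` whose rows are the Veronese vectors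
`(sin² α_q, sin α_q cos α_q, cos² α_q)`; its determinant is `∏_{i < j} sin (α_i - α_j)`. -/

open Real Matrix

theorem Matrix.dotProduct_vecMulVec_mulVec {R n : Type*} [CommSemiring R] [Fintype n]
    (u v w t : n → R) : u ⬝ᵥ (vecMulVec v w *ᵥ t) = (u ⬝ᵥ v) * (w ⬝ᵥ t) := by
  rw [vecMulVec_mulVec]
  simp [dotProduct, Finset.sum_mul, mul_assoc]

section Systems

variable {R : Type*} [CommRing R]

theorem det_veronese_fin_three (x y : Fin 3 → R) :
    (of fun i => ![x i ^ 2, x i * y i, y i ^ 2]).det =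
      (x 0 * y 1 - x 1 * y 0) * (x 0 * y 2 - x 2 * y 0) * (x 1 * y 2 - x 2 * y 1) := by
  simp [det_fin_three]
  ring

variable [NoZeroDivisors R]

theorem eq_zero_of_two_by_two_system {b₀ b₁ x₀ x₁ y₀ y₁ : R} (h : x₀ * y₁ ≠ x₁ * y₀)
    (hx : b₀ * x₀ + b₁ * x₁ = 0) (hy : b₀ * y₀ + b₁ * y₁ = 0) : b₀ = 0 ∧ b₁ = 0 := by
  have hdet : x₀ * y₁ - x₁ * y₀ ≠ 0 := sub_ne_zero.mpr h
  constructor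
  · refine (mul_eq_zero.mp ?_).resolve_right hdet
    linear_combination y₁ * hx - x₁ * hy
  · refine (mul_eq_zero.mp ?_).resolve_right hdet
    linear_combination x₀ * hy - y₀ * hx

theorem eq_zero_of_veronese_system {x y : Fin 3 → R}
    (hxy : Pairwise fun i j => x i * y j ≠ x j * y i) {a : Fin 3 → R}
    (hsq_x : ∑ i, a i * x i ^ 2 = 0) (hmul : ∑ i, a i * (x i * y i) = 0)
    (hsq_y : ∑ i, a i * y i ^ 2 = 0) : a = 0 := by
  have hdet : (of fun i => ![x i ^ 2, x i * y i, y i ^ 2]).det ≠ 0 := by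
    rw [det_veronese_fin_three]
    refine mul_ne_zero (mul_ne_zero ?_ ?_) ?_ <;> exact sub_ne_zero.mpr (hxy (by decide))
  refine eq_zero_of_vecMul_eq_zero hdet ?_
  ext j
  fin_cases j <;> simp [vecMul, dotProduct, hsq_x, hmul, hsq_y]

theorem linearIndependent_vecMulVec_of_orthonormal {n : Type*} [Fintype n] {e z ν : n → R}
    (hee : e ⬝ᵥ e = 1) (hzz : z ⬝ᵥ z = 1) (hνν : ν ⬝ᵥ ν = 1)
    (hez : e ⬝ᵥ z = 0) (heν : e ⬝ᵥ ν = 0) (hzν : z ⬝ᵥ ν = 0)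
    {x y : Fin 3 → R} (hxy : Pairwise fun i j => x i * y j ≠ x j * y i)
    {ω ωα : Fin 3 → n → R} (hω : ∀ q, ω q = x q • e + y q • z)
    (hωα : ∀ q, ωα q = y q • e - x q • z) :
    LinearIndependent R
      ![vecMulVec (ω 0) (ωα 0), vecMulVec (ω 1) (ωα 1), vecMulVec (ω 2) (ωα 2),
        vecMulVec (ω 0) ν, vecMulVec (ω 1) ν] := by
  have hze : z ⬝ᵥ e = 0 := by rw [dotProduct_comm, hez]
  have hνe : ν ⬝ᵥ e = 0 := by rw [dotProduct_comm, heν]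
  have hνz : ν ⬝ᵥ z = 0 := by rw [dotProduct_comm, hzν]
  rw [Fintype.linearIndependent_iff]
  intro g hg
  have pairing (u w : n → R) := congrArg (fun M => u ⬝ᵥ M *ᵥ w) hg
  have hpair_ee := pairing e e
  have hpair_ez := pairing e z
  have hpair_ze := pairing z e
  have hpair_eν := pairing e ν
  have hpair_zν := pairing z ν
  simp only [Fin.sum_univ_five, cons_val_zero, cons_val_one, cons_val, hω, hωα, add_mulVec,
    smul_mulVec, zero_mulVec, dotProduct_add, dotProduct_smul, dotProduct_zero,
    sub_dotProduct, smul_dotProduct, dotProduct_vecMulVec_mulVec, hee, hzz, hνν, hez, heν, hzν, hze,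
    hνe, hνz, smul_eq_mul, mul_one, mul_zero, add_zero, zero_add, sub_zero, zero_sub, sub_self,
    mul_neg] at hpair_ee hpair_ez hpair_ze hpair_eν hpair_zν
  obtain ⟨hg₃, hg₄⟩ :=
    eq_zero_of_two_by_two_system (hxy (by decide : (0 : Fin 3) ≠ 1)) hpair_eν hpair_zν
  have hg₀₁₂ : ![g 0, g 1, g 2] = 0 := by
    refine eq_zero_of_veronese_system hxy ?_ ?_ ?_ <;>
      simp only [Fin.sum_univ_three, cons_val_zero, cons_val_one, cons_val]
    · linear_combination -hpair_ez
    · linear_combination hpair_ee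
    · linear_combination hpair_ze
  intro k
  fin_cases k
  exacts [congrFun hg₀₁₂ 0, congrFun hg₀₁₂ 1, congrFun hg₀₁₂ 2, hg₃, hg₄]

end Systems

theorem Real.sin_mul_cos_ne_of_sub_ne_int_mul_pi {a b : ℝ} (h : ∀ n : ℤ, a - b ≠ n * π) :
    sin a * cos b ≠ sin b * cos a := by
  intro heq
  obtain ⟨n, hn⟩ := sin_eq_zero_iff.mp (by rw [sin_sub]; linear_combination heq : sin (a - b) = 0)
  exact h n hn.symm

/-- The five rank-one tensors `ω_q ⊗ (ω_q)_α` (q = 1,2,3) and `ω_q ⊗ (ω_q)_β` (q = 1,2)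
are linearly independent in the space of 3×3 matrices. -/
theorem stmt_10 (α : Fin 3 → ℝ) (β : ℝ)
    (ω ωα : Fin 3 → Fin 3 → ℝ) (ωβ : Fin 3 → ℝ)
    (hω : ω = fun q => ![Real.sin (α q) * Real.cos β, Real.sin (α q) * Real.sin β,
      Real.cos (α q)])
    (hωα : ωα = fun q => ![Real.cos (α q) * Real.cos β, Real.cos (α q) * Real.sin β,
      -Real.sin (α q)])
    (hωβ : ωβ = ![-Real.sin β, Real.cos β, 0])
    (hα : ∀ i j : Fin 3, i ≠ j → ∀ n : ℤ, α i - α j ≠ n * Real.pi) :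
    LinearIndependent ℝ
      ![vecMulVec (ω 0) (ωα 0), vecMulVec (ω 1) (ωα 1), vecMulVec (ω 2) (ωα 2),
        vecMulVec (ω 0) ωβ, vecMulVec (ω 1) ωβ] := by
  have hω' : ∀ q, ω q = sin (α q) • ![cos β, sin β, 0] + cos (α q) • ![0, 0, 1] := by
    subst hω; intro q; ext i; fin_cases i <;> simp [mul_comm]
  have hωα' : ∀ q, ωα q = cos (α q) • ![cos β, sin β, 0] - sin (α q) • ![0, 0, 1] := by
    subst hωα; intro q; ext i; fin_cases i <;> simp [mul_comm]
  subst hωβ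
  refine linearIndependent_vecMulVec_of_orthonormal ?_ ?_ ?_ ?_ ?_ ?_
    (fun i j hij => sin_mul_cos_ne_of_sub_ne_int_mul_pi (hα i j hij)) hω' hωα'
  all_goals simp [dotProduct, Fin.sum_univ_three, ← sq, mul_comm]
end
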